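/- Let F be a finite field of characteristic 2, a ∈ F, and x ∈ F, and set b = x² + x + a. Let ψ : F → {±1} be given by ψ(z) = (−1)^{tr(z)}. Then ∑_{w ∈ F, w ≠ x} ψ(w)·ψ((xw + x + a)/(x + w)) = ∑_{z ∈ F, z ≠ 0} ψ(z + b/z); that is, the adjacency character sum equals a Kloosterman sum. -/

import Mathlib

/-!
Since `ψ` is an additive character, the summand is `ψ(w + (xw + x + a)/(x + w))`. Substituting
`w = x + z`, the numerator becomes `xz + b`, so the argument of `ψ` is `x + z + x + b/z = z + b/z`.
-/

/-- The absolute trace `tr(x) = x + x² + x⁴ + ⋯ + x^{2^{k-1}}` of a finite field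
of order `2^k`, taking values in the prime subfield `{0, 1} ⊆ F`. -/
def fieldTr {F : Type*} [Field F] (k : ℕ) (x : F) : F :=
  ∑ i ∈ Finset.range k, x ^ (2 ^ i)

/-- The additive character `ψ(z) = (−1)^{tr(z)}`. -/
def psi {F : Type*} [Field F] [DecidableEq F] (k : ℕ) (z : F) : ℤ :=
  if fieldTr k z = 0 then 1 else -1

theorem Finset.sum_univ_erase_eq_sum_univ_erase_zero {G M : Type*} [AddGroup G] [Fintype G]
    [DecidableEq G] [AddCommMonoid M] (f : G → M) (x : G) :
    ∑ w ∈ univ.erase x, f w = ∑ z ∈ univ.erase 0, f (x + z) := by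
  have hmap : (univ.erase (0 : G)).map (Equiv.addLeft x).toEmbedding = univ.erase x := by
    rw [map_erase, map_univ_equiv, Equiv.coe_toEmbedding, Equiv.coe_addLeft]
    simp only [add_zero]
  rw [← hmap, sum_map]
  rfl

section CharTwo

variable {F : Type*} [Field F] [CharP F 2]

theorem fieldTr_add (k : ℕ) (u v : F) : fieldTr k (u + v) = fieldTr k u + fieldTr k v := by
  simp only [fieldTr, ← Finset.sum_add_distrib, add_pow_char_pow]

theorem fieldTr_sq_add_self (k : ℕ) (x : F) :
    fieldTr k x ^ 2 + x = fieldTr k x + x ^ 2 ^ k := by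
  have hsq : fieldTr k x ^ 2 = ∑ i ∈ Finset.range k, x ^ 2 ^ (i + 1) := by
    rw [fieldTr, CharTwo.sum_sq]
    exact Finset.sum_congr rfl fun i _ => by rw [← pow_mul, pow_succ]
  rw [hsq, fieldTr, ← Finset.sum_range_succ, Finset.sum_range_succ' (fun i => x ^ 2 ^ i),
    pow_zero, pow_one]

theorem fieldTr_eq_zero_or_one [Fintype F] {k : ℕ} (hcard : Fintype.card F = 2 ^ k) (x : F) :
    fieldTr k x = 0 ∨ fieldTr k x = 1 := by
  refine eq_zero_or_one_of_sq_eq_self (add_right_cancel (b := x) ?_)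
  rw [fieldTr_sq_add_self, ← hcard, FiniteField.pow_card]

theorem psi_add [Fintype F] [DecidableEq F] {k : ℕ} (hcard : Fintype.card F = 2 ^ k) (u v : F) :
    psi k (u + v) = psi k u * psi k v := by
  unfold psi
  rw [fieldTr_add]
  rcases fieldTr_eq_zero_or_one hcard u with hu | hu <;>
    rcases fieldTr_eq_zero_or_one hcard v with hv | hv <;>
      simp [hu, hv, CharTwo.add_self_eq_zero]

theorem add_adjacency_eq_add_div (a x : F) {z : F} (hz : z ≠ 0) :
    x + z + (x * (x + z) + x + a) / (x + (x + z)) = z + (x ^ 2 + x + a) / z := by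
  rw [CharTwo.add_cancel_left]
  field_simp
  linear_combination (x * z) * (CharTwo.two_eq_zero : (2 : F) = 0)

end CharTwo

theorem adjacency_sum_eq_kloosterman
    {F : Type*} [Field F] [Fintype F] [DecidableEq F] [CharP F 2] (k : ℕ)
    (hcard : Fintype.card F = 2 ^ k) (a x : F) :
    ∑ w ∈ Finset.univ.erase x, psi k w * psi k ((x * w + x + a) / (x + w)) =
      ∑ z ∈ Finset.univ.erase (0 : F), psi k (z + (x ^ 2 + x + a) / z) := by
  rw [Finset.sum_univ_erase_eq_sum_univ_erase_zero]
  refine Finset.sum_congr rfl fun z hz => ?_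
  rw [← psi_add hcard, add_adjacency_eq_add_div a x (Finset.ne_of_mem_erase hz)]
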